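/- arXiv:1904.08925 — 5 statements merged into one kernel-verified Lean document; each statement's English description precedes it below -/
import Mathlib

section
/- Let d ≥ 2 be an integer, let tcb, tcs be transaction cost rates with 0 ≤ tcb < 1 and 0 ≤ tcs < 1, let π_1,…,π_d be nonnegative reals with ∑_{i=1}^d π_i = 1, let c_1,…,c_d be nonnegative reals, and let D̂ ≥ 0. Define h(c) = (1+tcb)·∑_{i=1}^d (c−c_i)^+·π_i − (1−tcs)·∑_{i=1}^d (c_i−c)^+·π_i and D̂_j = h(c_j). Suppose j ∈ {1,…,d} satisfies D̂_j ≤ D̂ and D̂_i ≤ D̂_j for every i ∈ {1,…,d} with D̂_i ≤ D̂. Then the real number c = [(1+tcb)·∑_{i=1}^d c_i·π_i·1_{c_i ≤ c_j} + (1−tcs)·∑_{i=1}^d c_i·π_i·1_{c_i > c_j} + D̂] / [(1+tcb)·∑_{i=1}^d π_i·1_{c_i ≤ c_j} + (1−tcs)·∑_{i=1}^d π_i·1_{c_i > c_j}] satisfies h(c) = D̂, and it is the unique real number with this property. -/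
/-!
`h` is a `π`-weighted sum of two-slope piecewise linear functions of `c` with positive slopes
`1 + tcb` and `1 - tcs`, hence strictly increasing, which gives uniqueness. Between `c_j` and the
next larger `c_i` it is affine, and the displayed formula is the root of that affine piece. The
choice of `j` puts this root inside the segment: `h(c_j) ≤ D̂`, while `h` already exceeds `D̂` at
the next kink, since otherwise that kink would have been chosen instead of `c_j`.
-/

open Finset

noncomputable section Rebalance

variable {ι : Type*} [Fintype ι] (β σ : ℝ) (π c : ι → ℝ)

def rebalance (x : ℝ) : ℝ :=
  β * ∑ i, max (x - c i) 0 * π i - σ * ∑ i, max (c i - x) 0 * π i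

def kinkSlope (t : ℝ) : ℝ :=
  β * ∑ i, (if c i ≤ t then π i else 0) + σ * ∑ i, (if t < c i then π i else 0)

def kinkOffset (t : ℝ) : ℝ :=
  β * ∑ i, (if c i ≤ t then c i * π i else 0) + σ * ∑ i, (if t < c i then c i * π i else 0)

variable {β σ π c}

lemma strictMono_twoSlope (hβ : 0 < β) (hσ : 0 < σ) (a : ℝ) :
    StrictMono fun x : ℝ => β * max (x - a) 0 - σ * max (a - x) 0 := by
  intro x y hxy
  simp only [max_def]
  split_ifs <;> nlinarith

lemma strictMono_rebalance (hβ : 0 < β) (hσ : 0 < σ) (hπ : ∀ i, 0 ≤ π i)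
    (hπ_pos : ∃ i, 0 < π i) : StrictMono (rebalance β σ π c) := by
  intro x y hxy
  have hterm := fun i => strictMono_twoSlope hβ hσ (c i) hxy
  have hsum : ∀ z, rebalance β σ π c z
      = ∑ i, (β * max (z - c i) 0 - σ * max (c i - z) 0) * π i := by
    intro z
    simp only [rebalance, mul_sum, sub_mul, sum_sub_distrib, mul_assoc]
  rw [hsum, hsum]
  obtain ⟨k, hk⟩ := hπ_pos
  exact sum_lt_sum (fun i _ => mul_le_mul_of_nonneg_right (hterm i).le (hπ i))
    ⟨k, mem_univ k, mul_lt_mul_of_pos_right (hterm k) hk⟩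

lemma kinkSlope_pos (hβ : 0 < β) (hσ : 0 < σ) (hπ : ∀ i, 0 ≤ π i)
    (hπ_pos : ∃ i, 0 < π i) (t : ℝ) : 0 < kinkSlope β σ π c t := by
  rw [kinkSlope, mul_sum, mul_sum, ← sum_add_distrib]
  obtain ⟨k, hk⟩ := hπ_pos
  refine sum_pos' (fun i _ => ?_) ⟨k, mem_univ k, ?_⟩
  · have := hπ i
    split_ifs <;> positivity
  · split_ifs <;> first | positivity | (exfalso; linarith)

lemma rebalance_eq_kink {t x : ℝ} (htx : t ≤ x) (hx : ∀ i, t < c i → x ≤ c i) :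
    rebalance β σ π c x = kinkSlope β σ π c t * x - kinkOffset β σ π c t := by
  simp only [rebalance, kinkSlope, kinkOffset, add_mul, sum_mul, mul_sum,
    ← sum_add_distrib, ← sum_sub_distrib]
  refine sum_congr rfl fun i _ => ?_
  by_cases hi : c i ≤ t
  · simp only [if_pos hi, if_neg (not_lt.mpr hi), max_eq_left (by linarith : 0 ≤ x - c i),
      max_eq_right (by linarith : c i - x ≤ 0)]
    ring
  · have hlt := lt_of_not_ge hi
    simp only [if_neg hi, if_pos hlt, max_eq_right (by linarith [hx i hlt] : x - c i ≤ 0),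
      max_eq_left (by linarith [hx i hlt] : 0 ≤ c i - x)]
    ring

lemma rebalance_kinkRoot (hβ : 0 < β) (hσ : 0 < σ) (hπ : ∀ i, 0 ≤ π i)
    (hπ_pos : ∃ i, 0 < π i) {D : ℝ} (j : ι) (hj : rebalance β σ π c (c j) ≤ D)
    (hj_max : ∀ i, rebalance β σ π c (c i) ≤ D →
      rebalance β σ π c (c i) ≤ rebalance β σ π c (c j)) :
    rebalance β σ π c ((kinkOffset β σ π c (c j) + D) / kinkSlope β σ π c (c j)) = D := by
  set A := kinkSlope β σ π c (c j)
  set B := kinkOffset β σ π c (c j)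
  set x := (B + D) / A
  have hA : 0 < A := kinkSlope_pos hβ hσ hπ hπ_pos _
  have hx : A * x - B = D := by rw [mul_div_cancel₀ _ hA.ne']; ring
  have hjx : c j ≤ x := by
    have : A * c j - B ≤ A * x - B := by
      rw [hx, ← rebalance_eq_kink le_rfl fun i hi => hi.le]; exact hj
    exact le_of_mul_le_mul_left (by linarith) hA
  -- `x` lies below the first kink above `c j`, since `rebalance` already exceeds `D` there.
  have hxc : ∀ i, c j < c i → x ≤ c i := by
    intro i hi
    obtain ⟨k, hk, hk_min⟩ := exists_min_image (univ.filter (c j < c ·)) c ⟨i, by simp [hi]⟩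
    rw [mem_filter] at hk
    have hDk : D < rebalance β σ π c (c k) := by
      by_contra! hkD
      exact (hj_max k hkD).not_gt (strictMono_rebalance hβ hσ hπ hπ_pos hk.2)
    rw [rebalance_eq_kink hk.2.le fun i' hi' => hk_min i' (by simp [hi']), ← hx] at hDk
    exact (lt_of_mul_lt_mul_left (by linarith) hA.le).le.trans (hk_min i (by simp [hi]))
  rw [rebalance_eq_kink hjx hxc, hx]

end Rebalance

theorem stmt_0_general (d : ℕ)
    (tcb tcs : ℝ) (htcb0 : 0 ≤ tcb)
    (htcs1 : tcs < 1)
    (π cc : Fin d → ℝ) (hπ : ∀ i, 0 ≤ π i) (hπsum : ∑ i, π i = 1)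
    (Dh : ℝ)
    (h : ℝ → ℝ)
    (hdef : ∀ c, h c =
      (1 + tcb) * ∑ i, max (c - cc i) 0 * π i
        - (1 - tcs) * ∑ i, max (cc i - c) 0 * π i)
    (Dhat : Fin d → ℝ) (hDhat : ∀ i, Dhat i = h (cc i))
    (j : Fin d) (hj1 : Dhat j ≤ Dh)
    (hj2 : ∀ i, Dhat i ≤ Dh → Dhat i ≤ Dhat j)
    (cstar : ℝ)
    (hcstar : cstar =
      ((1 + tcb) * ∑ i, (if cc i ≤ cc j then cc i * π i else 0)
        + (1 - tcs) * ∑ i, (if cc j < cc i then cc i * π i else 0) + Dh)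
      / ((1 + tcb) * ∑ i, (if cc i ≤ cc j then π i else 0)
        + (1 - tcs) * ∑ i, (if cc j < cc i then π i else 0))) :
    h cstar = Dh ∧ ∀ c' : ℝ, h c' = Dh → c' = cstar := by
  have hh : h = rebalance (1 + tcb) (1 - tcs) π cc := funext hdef
  have hβ : 0 < 1 + tcb := by linarith
  have hσ : 0 < 1 - tcs := by linarith
  have hπ_pos : ∃ i, 0 < π i := by
    obtain ⟨i, -, hi⟩ := exists_lt_of_sum_lt (s := univ) (f := 0) (g := π) (by simp [hπsum])
    exact ⟨i, hi⟩
  simp only [hDhat, hh] at hj1 hj2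
  have hroot : h cstar = Dh := by
    rw [hh, hcstar]
    exact rebalance_kinkRoot hβ hσ hπ hπ_pos j hj1 hj2
  refine ⟨hroot, fun c' hc' => ?_⟩
  rw [hh] at hroot hc'
  exact (strictMono_rebalance hβ hσ hπ hπ_pos).injective (hc'.trans hroot.symm)

/-- Proposition 1 of the paper: the explicit candidate `cstar` solves the
self-financing rebalancing equation `h c = D̂` and is the unique solution. -/
theorem stmt_0 (d : ℕ) (hd : 2 ≤ d)
    (tcb tcs : ℝ) (htcb0 : 0 ≤ tcb) (htcb1 : tcb < 1)
    (htcs0 : 0 ≤ tcs) (htcs1 : tcs < 1)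
    (π cc : Fin d → ℝ) (hπ : ∀ i, 0 ≤ π i) (hπsum : ∑ i, π i = 1)
    (hcc : ∀ i, 0 ≤ cc i)
    (Dh : ℝ) (hDh : 0 ≤ Dh)
    (h : ℝ → ℝ)
    (hdef : ∀ c, h c =
      (1 + tcb) * ∑ i, max (c - cc i) 0 * π i
        - (1 - tcs) * ∑ i, max (cc i - c) 0 * π i)
    (Dhat : Fin d → ℝ) (hDhat : ∀ i, Dhat i = h (cc i))
    (j : Fin d) (hj1 : Dhat j ≤ Dh)
    (hj2 : ∀ i, Dhat i ≤ Dh → Dhat i ≤ Dhat j)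
    (cstar : ℝ)
    (hcstar : cstar =
      ((1 + tcb) * ∑ i, (if cc i ≤ cc j then cc i * π i else 0)
        + (1 - tcs) * ∑ i, (if cc j < cc i then cc i * π i else 0) + Dh)
      / ((1 + tcb) * ∑ i, (if cc i ≤ cc j then π i else 0)
        + (1 - tcs) * ∑ i, (if cc j < cc i then π i else 0))) :
    h cstar = Dh ∧ ∀ c' : ℝ, h c' = Dh → c' = cstar :=
  stmt_0_general d tcb tcs htcb0 htcs1 π cc hπ hπsum Dh h hdef Dhat hDhat j hj1 hj2 cstar hcstar
end

section
/- Let d ≥ 2 be an integer, let tcb, tcs be reals with 0 ≤ tcb and 0 ≤ tcs < 1, let π_1,…,π_d be nonnegative reals with ∑_{i=1}^d π_i = 1, and let c_1,…,c_d be reals. Define h(c) = (1+tcb)·∑_{i=1}^d (c−c_i)^+·π_i − (1−tcs)·∑_{i=1}^d (c_i−c)^+·π_i. Then for all reals c ≤ c', one has (1−tcs)·(c'−c) ≤ h(c') − h(c) ≤ (1+tcb)·(c'−c). In particular, h is strictly increasing and (1+tcb)-Lipschitz continuous. -/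
/-!
Each summand of `h` is a hinge in `c` with slope `1 - tcs` left of `c_i` and `1 + tcb` right
of it, so its increments over `[c, c']` lie between `(1 - tcs) (c' - c)` and
`(1 + tcb) (c' - c)`; a convex combination of such functions has the same slope bounds.
-/

open Finset

def HasSlopeBounds (m M : ℝ) (f : ℝ → ℝ) : Prop :=
  ∀ x y, x ≤ y → m * (y - x) ≤ f y - f x ∧ f y - f x ≤ M * (y - x)

namespace HasSlopeBounds

variable {m M : ℝ} {f : ℝ → ℝ}

theorem strictMono (hf : HasSlopeBounds m M f) (hm : 0 < m) : StrictMono f := fun x y hxy => by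
  have hinc := (hf x y hxy.le).1
  have hpos := mul_pos hm (sub_pos.2 hxy)
  linarith

theorem abs_sub_le (hf : HasSlopeBounds m M f) (hm : -M ≤ m) {x y : ℝ} (hxy : x ≤ y) :
    |f y - f x| ≤ M * (y - x) := by
  have hscale := mul_le_mul_of_nonneg_right hm (sub_nonneg.2 hxy)
  rw [neg_mul] at hscale
  exact abs_le.2 ⟨hscale.trans (hf x y hxy).1, (hf x y hxy).2⟩

theorem lipschitzWith (hf : HasSlopeBounds m M f) (hm : -M ≤ m) :
    LipschitzWith M.toNNReal f := by
  have hM : 0 ≤ M := by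
    have := hf 0 1 zero_le_one
    linarith
  refine LipschitzWith.of_dist_le_mul fun x y => ?_
  rw [Real.coe_toNNReal _ hM, Real.dist_eq, Real.dist_eq]
  rcases le_total x y with hxy | hyx
  · rw [abs_sub_comm, abs_sub_comm x, abs_of_nonneg (sub_nonneg.2 hxy)]
    exact hf.abs_sub_le hm hxy
  · rw [abs_of_nonneg (sub_nonneg.2 hyx)]
    exact hf.abs_sub_le hm hyx

theorem sum_mul {ι : Type*} {s : Finset ι} {f : ι → ℝ → ℝ} {w : ι → ℝ}
    (hf : ∀ i ∈ s, HasSlopeBounds m M (f i)) (hw : ∀ i ∈ s, 0 ≤ w i)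
    (hw1 : ∑ i ∈ s, w i = 1) :
    HasSlopeBounds m M fun x => ∑ i ∈ s, f i x * w i := by
  intro x y hxy
  have hscale : ∀ k : ℝ, k * (y - x) = ∑ i ∈ s, k * (y - x) * w i := fun k => by
    rw [← mul_sum, hw1, mul_one]
  simp only [← sum_sub_distrib, ← sub_mul]
  rw [hscale m, hscale M]
  exact ⟨sum_le_sum fun i hi => mul_le_mul_of_nonneg_right (hf i hi x y hxy).1 (hw i hi),
    sum_le_sum fun i hi => mul_le_mul_of_nonneg_right (hf i hi x y hxy).2 (hw i hi)⟩

end HasSlopeBounds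

theorem hasSlopeBounds_hinge {α β : ℝ} (hαβ : α ≤ β) (a : ℝ) :
    HasSlopeBounds α β fun c => β * max (c - a) 0 - α * max (a - c) 0 := by
  intro c c' hcc
  have hsplit : ∀ x : ℝ, max (a - x) 0 = max (x - a) 0 - (x - a) := fun x => by
    rcases le_total x a with hxa | hax
    · rw [max_eq_left (by linarith), max_eq_right (by linarith)]; ring
    · rw [max_eq_right (by linarith), max_eq_left (by linarith)]; ring
  have hmono : 0 ≤ max (c' - a) 0 - max (c - a) 0 :=
    sub_nonneg.2 (max_le_max (by linarith) le_rfl)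
  have hlip : max (c' - a) 0 - max (c - a) 0 ≤ c' - c := by
    have := max_le (by linarith [le_max_left (c - a) 0] : c' - a ≤ max (c - a) 0 + (c' - c))
      (by linarith [le_max_right (c - a) 0] : (0 : ℝ) ≤ max (c - a) 0 + (c' - c))
    linarith
  have hdiff : β * max (c' - a) 0 - α * max (a - c') 0 - (β * max (c - a) 0 - α * max (a - c) 0)
      = (β - α) * (max (c' - a) 0 - max (c - a) 0) + α * (c' - c) := by
    rw [hsplit c, hsplit c']; ring
  rw [hdiff]
  have hgap := sub_nonneg.2 hαβ
  constructor
  · linarith [mul_nonneg hgap hmono]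
  · linarith [mul_le_mul_of_nonneg_left hlip hgap]

theorem stmt_1_general (d : ℕ)
    (tcb tcs : ℝ) (htcb0 : 0 ≤ tcb) (htcs0 : 0 ≤ tcs) (htcs1 : tcs < 1)
    (π cc : Fin d → ℝ) (hπ : ∀ i, 0 ≤ π i) (hπsum : ∑ i, π i = 1)
    (h : ℝ → ℝ)
    (hdef : ∀ c, h c =
      (1 + tcb) * ∑ i, max (c - cc i) 0 * π i
        - (1 - tcs) * ∑ i, max (cc i - c) 0 * π i) :
    (∀ c c' : ℝ, c ≤ c' →
        (1 - tcs) * (c' - c) ≤ h c' - h c ∧ h c' - h c ≤ (1 + tcb) * (c' - c))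
      ∧ StrictMono h ∧ LipschitzWith (1 + tcb).toNNReal h := by
  have hsum : h = fun c => ∑ i, ((1 + tcb) * max (c - cc i) 0
      - (1 - tcs) * max (cc i - c) 0) * π i := by
    funext c
    simp only [hdef, mul_sum, sub_mul, sum_sub_distrib, mul_assoc]
  have hslope : HasSlopeBounds (1 - tcs) (1 + tcb) h := by
    rw [hsum]
    exact HasSlopeBounds.sum_mul (fun i _ => hasSlopeBounds_hinge (by linarith) (cc i))
      (fun i _ => hπ i) hπsum
  exact ⟨hslope, hslope.strictMono (by linarith), hslope.lipschitzWith (by linarith)⟩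

/-- Two-sided slope bounds for the rebalancing function `h`; in particular
`h` is strictly increasing and `(1+tcb)`-Lipschitz continuous. -/
theorem stmt_1 (d : ℕ) (hd : 2 ≤ d)
    (tcb tcs : ℝ) (htcb0 : 0 ≤ tcb) (htcs0 : 0 ≤ tcs) (htcs1 : tcs < 1)
    (π cc : Fin d → ℝ) (hπ : ∀ i, 0 ≤ π i) (hπsum : ∑ i, π i = 1)
    (h : ℝ → ℝ)
    (hdef : ∀ c, h c =
      (1 + tcb) * ∑ i, max (c - cc i) 0 * π i
        - (1 - tcs) * ∑ i, max (cc i - c) 0 * π i) :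
    (∀ c c' : ℝ, c ≤ c' →
        (1 - tcs) * (c' - c) ≤ h c' - h c ∧ h c' - h c ≤ (1 + tcb) * (c' - c))
      ∧ StrictMono h ∧ LipschitzWith (1 + tcb).toNNReal h :=
  stmt_1_general d tcb tcs htcb0 htcs0 htcs1 π cc hπ hπsum h hdef
end

section
/- Let d ≥ 2 be an integer, let tcb, tcs be reals with 0 ≤ tcb and 0 ≤ tcs < 1, let π_1,…,π_d be nonnegative reals with ∑_{i=1}^d π_i = 1, let c_1,…,c_d be nonnegative reals, and let D̂ ≥ 0. Define h(c) = (1+tcb)·∑_{i=1}^d (c−c_i)^+·π_i − (1−tcs)·∑_{i=1}^d (c_i−c)^+·π_i. Then there exists exactly one real number c with h(c) = D̂. -/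
/-!
Each summand `c ↦ (1 + tcb)·(c − cᵢ)⁺ − (1 − tcs)·(cᵢ − c)⁺` is piecewise linear with slopes
`1 − tcs` and `1 + tcb`, both at least `1 − tcs > 0`. Averaging against the weights `πᵢ`,
`h y − h x ≥ (1 − tcs)(y − x)` for `x ≤ y`, so the continuous function `h` is strictly increasing
and tends to `±∞` at `±∞`; hence it is a bijection of `ℝ`, and every value is attained exactly once.
-/

open Filter Function

lemma max_sub_zero_sub_max_sub_zero (a b : ℝ) : max (a - b) 0 - max (b - a) 0 = a - b := by
  rcases le_total a b with h | h
  · rw [max_eq_right (by linarith), max_eq_left (by linarith)]; ring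
  · rw [max_eq_left (by linarith), max_eq_right (by linarith)]; ring

lemma mul_sub_le_sub_of_kink {m M a x y : ℝ} (hmM : m ≤ M) (hxy : x ≤ y) :
    m * (y - x) ≤
      (M * max (y - a) 0 - m * max (a - y) 0) - (M * max (x - a) 0 - m * max (a - x) 0) := by
  have hx : max (a - x) 0 = max (x - a) 0 - (x - a) := by
    linarith [max_sub_zero_sub_max_sub_zero x a]
  have hy : max (a - y) 0 = max (y - a) 0 - (y - a) := by
    linarith [max_sub_zero_sub_max_sub_zero y a]
  have hpos : max (x - a) 0 ≤ max (y - a) 0 := max_le_max (by linarith) le_rfl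
  rw [hx, hy]
  nlinarith [mul_nonneg (sub_nonneg.2 hmM) (sub_nonneg.2 hpos)]

lemma bijective_of_mul_sub_le_sub {f : ℝ → ℝ} {m : ℝ} (hf : Continuous f) (hm : 0 < m)
    (hslope : ∀ x y, x ≤ y → m * (y - x) ≤ f y - f x) : Bijective f := by
  have hmono : StrictMono f := fun x y hxy => by
    nlinarith [hslope x y hxy.le, mul_pos hm (sub_pos.2 hxy)]
  refine ⟨hmono.injective, hf.surjective ?_ ?_⟩
  · refine tendsto_atTop_mono' atTop ?_
      (tendsto_atTop_add_const_left _ (f 0) (tendsto_id.const_mul_atTop hm))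
    filter_upwards [eventually_ge_atTop 0] with x hx
    simp only [id]
    linarith [hslope 0 x hx]
  · refine tendsto_atBot_mono' atBot ?_
      (tendsto_atBot_add_const_left _ (f 0) (tendsto_id.const_mul_atBot hm))
    filter_upwards [eventually_le_atBot 0] with x hx
    simp only [id]
    linarith [hslope x 0 hx]

theorem stmt_2_general (d : ℕ)
    (tcb tcs : ℝ) (htcb0 : 0 ≤ tcb) (htcs0 : 0 ≤ tcs) (htcs1 : tcs < 1)
    (π cc : Fin d → ℝ) (hπ : ∀ i, 0 ≤ π i) (hπsum : ∑ i, π i = 1)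
    (Dh : ℝ)
    (h : ℝ → ℝ)
    (hdef : ∀ c, h c =
      (1 + tcb) * ∑ i, max (c - cc i) 0 * π i
        - (1 - tcs) * ∑ i, max (cc i - c) 0 * π i) :
    ∃! c : ℝ, h c = Dh := by
  have hsum : ∀ c, h c =
      ∑ i, ((1 + tcb) * max (c - cc i) 0 - (1 - tcs) * max (cc i - c) 0) * π i := fun c => by
    simp only [hdef, Finset.mul_sum, ← Finset.sum_sub_distrib, sub_mul, mul_assoc]
  have hcont : Continuous h := by
    rw [funext hdef]
    fun_prop
  have hslope : ∀ x y, x ≤ y → (1 - tcs) * (y - x) ≤ h y - h x := fun x y hxy =>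
    calc (1 - tcs) * (y - x) = ∑ i, (1 - tcs) * (y - x) * π i := by
          rw [← Finset.mul_sum, hπsum, mul_one]
      _ ≤ h y - h x := by
          rw [hsum, hsum, ← Finset.sum_sub_distrib]
          refine Finset.sum_le_sum fun i _ => ?_
          rw [← sub_mul]
          exact mul_le_mul_of_nonneg_right
            (mul_sub_le_sub_of_kink (by linarith) hxy) (hπ i)
  exact (bijective_of_mul_sub_le_sub hcont (by linarith) hslope).existsUnique Dh

/-- Existence and uniqueness of the solution of the self-financing
rebalancing equation `h c = D̂`. -/
theorem stmt_2 (d : ℕ) (hd : 2 ≤ d)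
    (tcb tcs : ℝ) (htcb0 : 0 ≤ tcb) (htcs0 : 0 ≤ tcs) (htcs1 : tcs < 1)
    (π cc : Fin d → ℝ) (hπ : ∀ i, 0 ≤ π i) (hπsum : ∑ i, π i = 1)
    (hcc : ∀ i, 0 ≤ cc i)
    (Dh : ℝ) (hDh : 0 ≤ Dh)
    (h : ℝ → ℝ)
    (hdef : ∀ c, h c =
      (1 + tcb) * ∑ i, max (c - cc i) 0 * π i
        - (1 - tcs) * ∑ i, max (cc i - c) 0 * π i) :
    ∃! c : ℝ, h c = Dh :=
  stmt_2_general d tcb tcs htcb0 htcs0 htcs1 π cc hπ hπsum Dh h hdef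
end

section
/- Let d ≥ 2 be an integer, let tcb, tcs be reals with 0 ≤ tcb and 0 ≤ tcs < 1, let π_1,…,π_d be nonnegative reals with ∑_{i=1}^d π_i = 1, and let c_1,…,c_d be reals. Define h(c) = (1+tcb)·∑_{i=1}^d (c−c_i)^+·π_i − (1−tcs)·∑_{i=1}^d (c_i−c)^+·π_i and D̂_j = h(c_j). Then for all i, k ∈ {1,…,d}, one has c_i ≤ c_k if and only if D̂_i ≤ D̂_k; that is, the family (D̂_i)_{i∈{1,…,d}} has the same ranking as (c_i)_{i∈{1,…,d}}. -/
/-!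
`h` is strictly increasing, so it preserves and reflects `≤`: it is a `π`-weighted sum of
piecewise linear functions with slopes `1 + tcb > 0` and `1 - tcs > 0`, and since the weights
sum to `1` at least one of them is positive.
-/

open Finset

lemma strictMono_mul_posPart_sub_mul_negPart {a b : ℝ} (ha : 0 < a) (hb : 0 < b) (x : ℝ) :
    StrictMono fun c => a * max (c - x) 0 - b * max (x - c) 0 := by
  intro c c' hcc'
  simp only [max_def]
  split_ifs <;> nlinarith

lemma StrictMono.sum_mul_of_sum_pos {ι : Type*} {s : Finset ι} {f : ι → ℝ → ℝ} {w : ι → ℝ}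
    (hf : ∀ i ∈ s, StrictMono (f i)) (hw : ∀ i ∈ s, 0 ≤ w i) (hw_sum : 0 < ∑ i ∈ s, w i) :
    StrictMono fun c => ∑ i ∈ s, f i c * w i := by
  intro c c' hcc'
  obtain ⟨j, hj, hwj⟩ : ∃ j ∈ s, 0 < w j := by
    simpa using exists_lt_of_sum_lt (f := fun _ => 0) (by simpa using hw_sum)
  refine sum_lt_sum (fun i hi => ?_) ⟨j, hj, ?_⟩
  · exact mul_le_mul_of_nonneg_right ((hf i hi).monotone hcc'.le) (hw i hi)
  · exact mul_lt_mul_of_pos_right (hf j hj hcc') hwj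

theorem stmt_3_general (d : ℕ)
    (tcb tcs : ℝ) (htcb0 : 0 ≤ tcb) (htcs1 : tcs < 1)
    (π cc : Fin d → ℝ) (hπ : ∀ i, 0 ≤ π i) (hπsum : ∑ i, π i = 1)
    (h : ℝ → ℝ)
    (hdef : ∀ c, h c =
      (1 + tcb) * ∑ i, max (c - cc i) 0 * π i
        - (1 - tcs) * ∑ i, max (cc i - c) 0 * π i)
    (Dhat : Fin d → ℝ) (hDhat : ∀ i, Dhat i = h (cc i)) :
    ∀ i k : Fin d, cc i ≤ cc k ↔ Dhat i ≤ Dhat k := by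
  have h_eq : h = fun c => ∑ i,
      ((1 + tcb) * max (c - cc i) 0 - (1 - tcs) * max (cc i - c) 0) * π i := by
    ext c
    simp only [hdef, mul_sum, ← sum_sub_distrib]
    exact sum_congr rfl fun i _ => by ring
  have h_strictMono : StrictMono h := h_eq ▸ StrictMono.sum_mul_of_sum_pos
    (fun i _ => strictMono_mul_posPart_sub_mul_negPart (by linarith) (by linarith) (cc i))
    (fun i _ => hπ i) (by rw [hπsum]; exact one_pos)
  intro i k
  rw [hDhat, hDhat, h_strictMono.le_iff_le]

/-- The family `(D̂_i)` has the same ranking as `(c_i)`. -/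
theorem stmt_3 (d : ℕ) (hd : 2 ≤ d)
    (tcb tcs : ℝ) (htcb0 : 0 ≤ tcb) (htcs0 : 0 ≤ tcs) (htcs1 : tcs < 1)
    (π cc : Fin d → ℝ) (hπ : ∀ i, 0 ≤ π i) (hπsum : ∑ i, π i = 1)
    (h : ℝ → ℝ)
    (hdef : ∀ c, h c =
      (1 + tcb) * ∑ i, max (c - cc i) 0 * π i
        - (1 - tcs) * ∑ i, max (cc i - c) 0 * π i)
    (Dhat : Fin d → ℝ) (hDhat : ∀ i, Dhat i = h (cc i)) :
    ∀ i k : Fin d, cc i ≤ cc k ↔ Dhat i ≤ Dhat k :=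
  stmt_3_general d tcb tcs htcb0 htcs1 π cc hπ hπsum h hdef Dhat hDhat
end

section
/- Let d ≥ 2 be an integer, let tcb, tcs be reals with 0 ≤ tcb and 0 ≤ tcs < 1, let π_1,…,π_d be nonnegative reals with ∑_{i=1}^d π_i = 1, let c_1,…,c_d be nonnegative reals, and let D̂ ≥ 0. Define h(c) = (1+tcb)·∑_{i=1}^d (c−c_i)^+·π_i − (1−tcs)·∑_{i=1}^d (c_i−c)^+·π_i and D̂_j = h(c_j). Suppose j ∈ {1,…,d} satisfies D̂_j ≤ D̂ and D̂_i ≤ D̂_j for every i with D̂_i ≤ D̂, and let c be a real with h(c) = D̂. Then c_j ≤ c, and for every i ∈ {1,…,d} one has c_i ≤ c if and only if c_i ≤ c_j. -/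
/-!
Using `x⁺ - (-x)⁺ = x` and `∑ π_i = 1`, the rebalancing function splits as
`h(c) = (1 - tcs)(c - ∑ c_i π_i) + (tcb + tcs) ∑ (c - c_i)⁺ π_i`:
a linear function of positive slope plus a nondecreasing one. So `h` is strictly increasing,
and both claims are read off by comparing values of `h`: `h(c_j) ≤ D̂ = h(c)`, and
`c_i ≤ c` gives `D̂_i ≤ D̂`, hence `D̂_i ≤ D̂_j` by the choice of `j`.
-/

open Finset

section Rebalancing

variable {ι : Type*} [Fintype ι]

noncomputable def rebalancingCost (tcb tcs : ℝ) (π cc : ι → ℝ) (c : ℝ) : ℝ :=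
  (1 + tcb) * ∑ i, max (c - cc i) 0 * π i - (1 - tcs) * ∑ i, max (cc i - c) 0 * π i

theorem rebalancingCost_eq_linear_add (tcb tcs : ℝ) (π cc : ι → ℝ) (hπsum : ∑ i, π i = 1)
    (c : ℝ) :
    rebalancingCost tcb tcs π cc c =
      (1 - tcs) * (c - ∑ i, cc i * π i) + (tcb + tcs) * ∑ i, max (c - cc i) 0 * π i := by
  have hsplit : ∑ i, max (c - cc i) 0 * π i - ∑ i, max (cc i - c) 0 * π i
      = c - ∑ i, cc i * π i := by
    rw [← sum_sub_distrib]
    calc ∑ i, (max (c - cc i) 0 * π i - max (cc i - c) 0 * π i)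
        = ∑ i, (c * π i - cc i * π i) := by
          refine sum_congr rfl fun i _ => ?_
          rw [← sub_mul, ← neg_sub c (cc i), max_zero_sub_eq_self, sub_mul]
      _ = c - ∑ i, cc i * π i := by rw [sum_sub_distrib, ← mul_sum, hπsum, mul_one]
  rw [rebalancingCost, ← hsplit]
  ring

theorem strictMono_rebalancingCost {tcb tcs : ℝ} (htc : 0 ≤ tcb + tcs) (htcs1 : tcs < 1)
    {π : ι → ℝ} (hπ : ∀ i, 0 ≤ π i) (hπsum : ∑ i, π i = 1) (cc : ι → ℝ) :
    StrictMono (rebalancingCost tcb tcs π cc) := by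
  have hlinear : StrictMono fun c : ℝ => (1 - tcs) * (c - ∑ i, cc i * π i) :=
    fun a b hab => by dsimp only; gcongr
  have hposPart : Monotone fun c : ℝ => (tcb + tcs) * ∑ i, max (c - cc i) 0 * π i :=
    fun a b hab => by dsimp only; gcongr with i; exact hπ i
  simpa only [funext (rebalancingCost_eq_linear_add tcb tcs π cc hπsum)] using
    hlinear.add_monotone hposPart

end Rebalancing

theorem stmt_6_general (d : ℕ)
    (tcb tcs : ℝ) (htcb0 : 0 ≤ tcb) (htcs0 : 0 ≤ tcs) (htcs1 : tcs < 1)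
    (π cc : Fin d → ℝ) (hπ : ∀ i, 0 ≤ π i) (hπsum : ∑ i, π i = 1)
    (Dh : ℝ)
    (h : ℝ → ℝ)
    (hdef : ∀ c, h c =
      (1 + tcb) * ∑ i, max (c - cc i) 0 * π i
        - (1 - tcs) * ∑ i, max (cc i - c) 0 * π i)
    (Dhat : Fin d → ℝ) (hDhat : ∀ i, Dhat i = h (cc i))
    (j : Fin d) (hj1 : Dhat j ≤ Dh)
    (hj2 : ∀ i, Dhat i ≤ Dh → Dhat i ≤ Dhat j)
    (c : ℝ) (hc : h c = Dh) :
    cc j ≤ c ∧ ∀ i : Fin d, cc i ≤ c ↔ cc i ≤ cc j := by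
  have hmono : StrictMono h := by
    rw [show h = rebalancingCost tcb tcs π cc from funext hdef]
    exact strictMono_rebalancingCost (by linarith) htcs1 hπ hπsum cc
  have hjc : cc j ≤ c := hmono.le_iff_le.mp (by rw [← hDhat, hc]; exact hj1)
  refine ⟨hjc, fun i => ⟨fun hic => ?_, fun hij => hij.trans hjc⟩⟩
  rw [← hmono.le_iff_le, ← hDhat, ← hDhat]
  exact hj2 i (by rw [hDhat, ← hc]; exact hmono.monotone hic)

/-- The solution `c` of the rebalancing equation lies above `c_j`, and the
set of indices with `c_i ≤ c` agrees with the set of indices with `c_i ≤ c_j`. -/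
theorem stmt_6 (d : ℕ) (hd : 2 ≤ d)
    (tcb tcs : ℝ) (htcb0 : 0 ≤ tcb) (htcs0 : 0 ≤ tcs) (htcs1 : tcs < 1)
    (π cc : Fin d → ℝ) (hπ : ∀ i, 0 ≤ π i) (hπsum : ∑ i, π i = 1)
    (hcc : ∀ i, 0 ≤ cc i)
    (Dh : ℝ) (hDh : 0 ≤ Dh)
    (h : ℝ → ℝ)
    (hdef : ∀ c, h c =
      (1 + tcb) * ∑ i, max (c - cc i) 0 * π i
        - (1 - tcs) * ∑ i, max (cc i - c) 0 * π i)
    (Dhat : Fin d → ℝ) (hDhat : ∀ i, Dhat i = h (cc i))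
    (j : Fin d) (hj1 : Dhat j ≤ Dh)
    (hj2 : ∀ i, Dhat i ≤ Dh → Dhat i ≤ Dhat j)
    (c : ℝ) (hc : h c = Dh) :
    cc j ≤ c ∧ ∀ i : Fin d, cc i ≤ c ↔ cc i ≤ cc j :=
  stmt_6_general d tcb tcs htcb0 htcs0 htcs1 π cc hπ hπsum Dh h hdef Dhat hDhat j hj1 hj2 c hc
end
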